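/- Let $A=\bigoplus_{i\ge0}A_i$ be a graded algebra and $\mathsf{X}$ a graded left $A$-module. For $r\ge 0$ define $\mathsf{I}^r(\mathsf{X}) = \bigoplus_i\mathrm{Hom}_{A_0}((K_A)_r\otimes_{A_0}A_i, \mathsf{X})$, and maps $d_r(f) = f\circ(\mathrm{id}_{A_1}^{\otimes r}\otimes m_{A_1,A})$ and $\rho_r(f) = \lambda_{\mathsf{X}}\circ(\mathrm{id}_{A_1}\otimes f)$, where $\lambda_{\mathsf{X}}$ is the action map. Then $\rho_{r+1}\circ\rho_r = 0$ and $\rho_{r+1}\circ d_r = d_{r+1}\circ\rho_r$; consequently $\partial_r := d_r + (-1)^r\rho_r$ satisfies $\partial_{r+1}\circ\partial_r = 0$, making $(\mathsf{I}^\bullet(\mathsf{X}),\partial)$ a complex. -/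

import Mathlib

open TensorProduct

universe u

/-- A bundled `k`-module (used to build iterated tensor powers by recursion). -/
structure BMod (k : Type u) [Field k] where
  carrier : Type u
  [acg : AddCommGroup carrier]
  [mod : Module k carrier]

attribute [instance] BMod.acg BMod.mod

noncomputable section

variable (k A : Type u) [Field k] [Ring A] [Algebra k A] (𝒜 : ℕ → Submodule k A)

/-- Iterated tensor powers `T^i_k(A₁)` of `A₁ = 𝒜 1` (the `k`-linear model for
`T^i_{A₀}(A₁)`). -/
def TP (n : ℕ) : BMod k :=
  Nat.rec ⟨k⟩ (fun _ ih => ⟨↥(𝒜 1) ⊗[k] ih.carrier⟩) n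

/-- The carrier of `T^i(A₁)`. -/
abbrev U (n : ℕ) : Type u := (TP k A 𝒜 n).carrier

/-- Multiplication `A₁ ⊗ A → A`. -/
def mulA1A : (↥(𝒜 1) ⊗[k] A) →ₗ[k] A :=
  LinearMap.mul' k A ∘ₗ TensorProduct.map (𝒜 1).subtype LinearMap.id

/-- `id^{⊗ r} ⊗ m_{A₁,A} : T^{r+1}(A₁) ⊗ A → T^r(A₁) ⊗ A` (multiplication of the last
tensor factor into `A`). -/
def mJoin : ∀ i : ℕ, (U k A 𝒜 (i + 1) ⊗[k] A) →ₗ[k] (U k A 𝒜 i ⊗[k] A)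
  | 0 =>
      (TensorProduct.lid k A).symm.toLinearMap ∘ₗ mulA1A k A 𝒜 ∘ₗ
        LinearMap.rTensor A (TensorProduct.rid k ↥(𝒜 1)).toLinearMap
  | i + 1 =>
      (TensorProduct.assoc k ↥(𝒜 1) (U k A 𝒜 i) A).symm.toLinearMap ∘ₗ
        LinearMap.lTensor ↥(𝒜 1) (mJoin i) ∘ₗ
          (TensorProduct.assoc k ↥(𝒜 1) (U k A 𝒜 (i + 1)) A).toLinearMap

/-- `ker (m|_{A₁ ⊗ A₁})`. -/
def S2 : Submodule k (↥(𝒜 1) ⊗[k] ↥(𝒜 1)) :=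
  LinearMap.ker (LinearMap.mul' k A ∘ₗ TensorProduct.map (𝒜 1).subtype (𝒜 1).subtype)

/-- The submodule `T^r(A₁) ⊗ ker(m|_{A₁⊗A₁})` of `T^{r+2}(A₁)` (kernel condition at
the *last* junction). -/
def lastJ : ∀ r : ℕ, Submodule k (U k A 𝒜 (r + 2))
  | 0 =>
      Submodule.map
        (TensorProduct.congr (LinearEquiv.refl k ↥(𝒜 1))
          (TensorProduct.rid k ↥(𝒜 1)).symm).toLinearMap (S2 k A 𝒜)
  | r + 1 =>
      Submodule.map₂ (TensorProduct.mk k ↥(𝒜 1) (U k A 𝒜 (r + 2))) ⊤ (lastJ r)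

variable (X : Type u) [AddCommGroup X] [Module k X] [Module A X] [IsScalarTower k A X]

/-- The `A`-action on `X` as a `k`-bilinear map. -/
def actAX : A →ₗ[k] X →ₗ[k] X where
  toFun a :=
    { toFun := fun x => a • x
      map_add' := smul_add a
      map_smul' := fun c x => by
        simp only [RingHom.id_apply]
        rw [algebra_compatible_smul A c x, algebra_compatible_smul A c (a • x),
          ← mul_smul, ← mul_smul, Algebra.commutes] }
  map_add' a b := by ext x; simp [add_smul]
  map_smul' c a := by ext x; simp [mul_smul, algebra_compatible_smul A c x]

/-- The action `A₁ ⊗ X → X`. -/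
def actA1X : (↥(𝒜 1) ⊗[k] X) →ₗ[k] X :=
  TensorProduct.lift (actAX k A X ∘ₗ (𝒜 1).subtype)

variable (K : ∀ r : ℕ, Submodule k (U k A 𝒜 r))

/-- `(K_A)_r ⊗ A`, the `r`-th Koszul part of `T^r(A₁) ⊗ A`. -/
def KAU (r : ℕ) : Submodule k (U k A 𝒜 r ⊗[k] A) :=
  Submodule.map₂ (TensorProduct.mk k (U k A 𝒜 r) A) (K r) ⊤

/-- `d_r (f) = f ∘ (id^{⊗ r} ⊗ m_{A₁,A})`. -/
def dOp (r : ℕ) (f : (U k A 𝒜 r ⊗[k] A) →ₗ[k] X) :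
    (U k A 𝒜 (r + 1) ⊗[k] A) →ₗ[k] X :=
  f ∘ₗ mJoin k A 𝒜 r

/-- `ρ_r (f) = λ_X ∘ (id_{A₁} ⊗ f)`. -/
def rhoOp (r : ℕ) (f : (U k A 𝒜 r ⊗[k] A) →ₗ[k] X) :
    (U k A 𝒜 (r + 1) ⊗[k] A) →ₗ[k] X :=
  actA1X k A 𝒜 X ∘ₗ LinearMap.lTensor ↥(𝒜 1) f ∘ₗ
    (TensorProduct.assoc k ↥(𝒜 1) (U k A 𝒜 r) A).toLinearMap

/-- `∂_r = d_r + (-1)^r ρ_r`. -/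
def parOp (r : ℕ) (f : (U k A 𝒜 r ⊗[k] A) →ₗ[k] X) :
    (U k A 𝒜 (r + 1) ⊗[k] A) →ₗ[k] X :=
  dOp k A 𝒜 X r f + ((-1 : k) ^ r) • rhoOp k A 𝒜 X r f

end

/-!
`ρ` acts through the first tensor factor and `d` multiplies the last one into `A`, so the two
commute, and with the signs `∂_{r+1} ∂_r = d_{r+1} d_r - ρ_{r+1} ρ_r`. On `T^r ⊗ s ⊗ a` with
`s ∈ A₁ ⊗ A₁` at the last junction, `d_{r+1} d_r` multiplies `s` out inside `A`; on
`s ⊗ T^r ⊗ A`, `ρ_{r+1} ρ_r` acts on `𝖷` by the product of `s`. Both vanish when `s` lies in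
`ker(m|_{A₁⊗A₁})`, which is where the Koszul subspaces `K_{r+2}` live.
-/

section
variable {k A : Type u} [Field k] [Ring A] [Algebra k A] {𝒜 : ℕ → Submodule k A}

-- `U k A 𝒜 (r + 1)` is `𝒜 1 ⊗[k] U k A 𝒜 r` only after unfolding `TP`, with different instance
-- terms, so `rw` cannot act across the two: the operators are unfolded by `show` or `rfl` first.

lemma map_eq_zero_of_mem_KAU {M : Type*} [AddCommGroup M] [Module k M]
    {K : ∀ r : ℕ, Submodule k (U k A 𝒜 r)} {r : ℕ} {g : (U k A 𝒜 r ⊗[k] A) →ₗ[k] M}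
    (hg : ∀ u ∈ K r, ∀ a : A, g (u ⊗ₜ a) = 0) {z : U k A 𝒜 r ⊗[k] A}
    (hz : z ∈ KAU k A 𝒜 K r) : g z = 0 :=
  (Submodule.map₂_le.mpr fun u hu a _ => hg u hu a : _ ≤ LinearMap.ker g) hz

lemma mJoin_succ_assoc_symm_tmul (i : ℕ) (x : 𝒜 1) (z : U k A 𝒜 (i + 1) ⊗[k] A) :
    mJoin k A 𝒜 (i + 1) ((TensorProduct.assoc k (𝒜 1) (U k A 𝒜 (i + 1)) A).symm (x ⊗ₜ z)) =
      (TensorProduct.assoc k (𝒜 1) (U k A 𝒜 i) A).symm (x ⊗ₜ mJoin k A 𝒜 i z) :=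
  calc _ = (TensorProduct.assoc k (𝒜 1) (U k A 𝒜 i) A).symm ((mJoin k A 𝒜 i).lTensor (𝒜 1)
          (TensorProduct.assoc k (𝒜 1) (U k A 𝒜 (i + 1)) A
            ((TensorProduct.assoc k (𝒜 1) (U k A 𝒜 (i + 1)) A).symm (x ⊗ₜ z)))) := rfl
    _ = _ := by rw [LinearEquiv.apply_symm_apply, LinearMap.lTensor_tmul]

lemma mJoin_zero_mJoin_one_tmul (s : 𝒜 1 ⊗[k] 𝒜 1) (a : A) :
    mJoin k A 𝒜 0 (mJoin k A 𝒜 1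
      ((TensorProduct.congr (LinearEquiv.refl k (𝒜 1)) (TensorProduct.rid k (𝒜 1)).symm s) ⊗ₜ a)) =
      (1 : k) ⊗ₜ (LinearMap.mul' k A (TensorProduct.map (𝒜 1).subtype (𝒜 1).subtype s) * a) := by
  let L : 𝒜 1 ⊗[k] 𝒜 1 →ₗ[k] k ⊗[k] A := mJoin k A 𝒜 0 ∘ₗ mJoin k A 𝒜 1 ∘ₗ
    (TensorProduct.mk k (U k A 𝒜 2) A).flip a ∘ₗ
      (TensorProduct.congr (LinearEquiv.refl k (𝒜 1)) (TensorProduct.rid k (𝒜 1)).symm).toLinearMap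
  let R : 𝒜 1 ⊗[k] 𝒜 1 →ₗ[k] k ⊗[k] A := TensorProduct.mk k k A 1 ∘ₗ LinearMap.mulRight k a ∘ₗ
    LinearMap.mul' k A ∘ₗ TensorProduct.map (𝒜 1).subtype (𝒜 1).subtype
  have hLR : L = R := TensorProduct.ext' fun x y =>
    show (1 : k) ⊗ₜ (((1 : k) • (x : A)) * (((1 : k) • (y : A)) * a)) = (1 : k) ⊗ₜ ((x : A) * y * a) by
      rw [one_smul, one_smul, mul_assoc]
  exact LinearMap.congr_fun hLR s

lemma mJoin_mJoin_tmul_eq_zero :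
    ∀ (r : ℕ) {u : U k A 𝒜 (r + 2)}, u ∈ lastJ k A 𝒜 r → ∀ a : A,
      mJoin k A 𝒜 r (mJoin k A 𝒜 (r + 1) (u ⊗ₜ a)) = 0
  | 0, _, ⟨s, hs, rfl⟩, a => by
    have hs : LinearMap.mul' k A (TensorProduct.map (𝒜 1).subtype (𝒜 1).subtype s) = 0 := hs
    exact (mJoin_zero_mJoin_one_tmul s a).trans (by rw [hs, zero_mul]; exact tmul_zero _ _)
  | r + 1, _, hu, a => by
    rw [lastJ] at hu
    refine (Submodule.map₂_le.mpr ?_ : _ ≤ LinearMap.ker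
      (mJoin k A 𝒜 (r + 1) ∘ₗ mJoin k A 𝒜 (r + 2) ∘ₗ (TensorProduct.mk k _ A).flip a)) hu
    intro x _ v hv
    show mJoin k A 𝒜 (r + 1) ((TensorProduct.assoc k (𝒜 1) (U k A 𝒜 (r + 1)) A).symm
      (x ⊗ₜ mJoin k A 𝒜 (r + 1) (v ⊗ₜ a))) = 0
    exact (mJoin_succ_assoc_symm_tmul r x _).trans
      (by rw [mJoin_mJoin_tmul_eq_zero r hv a, tmul_zero, map_zero]; rfl)

variable {X : Type u} [AddCommGroup X] [Module k X]

lemma dOp_add (r : ℕ) (f g : (U k A 𝒜 r ⊗[k] A) →ₗ[k] X) :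
    dOp k A 𝒜 X r (f + g) = dOp k A 𝒜 X r f + dOp k A 𝒜 X r g :=
  LinearMap.add_comp _ _ _

lemma dOp_smul (r : ℕ) (c : k) (f : (U k A 𝒜 r ⊗[k] A) →ₗ[k] X) :
    dOp k A 𝒜 X r (c • f) = c • dOp k A 𝒜 X r f :=
  LinearMap.smul_comp _ _ _

lemma dOp_dOp_tmul_eq_zero (r : ℕ) (f : (U k A 𝒜 r ⊗[k] A) →ₗ[k] X) {u : U k A 𝒜 (r + 2)}
    (hu : u ∈ lastJ k A 𝒜 r) (a : A) : dOp k A 𝒜 X (r + 1) (dOp k A 𝒜 X r f) (u ⊗ₜ a) = 0 :=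
  (congrArg f (mJoin_mJoin_tmul_eq_zero r hu a)).trans (map_zero f)

variable [Module A X] [IsScalarTower k A X]

lemma rhoOp_add (r : ℕ) (f g : (U k A 𝒜 r ⊗[k] A) →ₗ[k] X) :
    rhoOp k A 𝒜 X r (f + g) = rhoOp k A 𝒜 X r f + rhoOp k A 𝒜 X r g := by
  refine LinearMap.ext fun z => ?_
  let y := TensorProduct.assoc k (𝒜 1) (U k A 𝒜 r) A z
  show actA1X k A 𝒜 X ((f + g).lTensor (𝒜 1) y) =
    actA1X k A 𝒜 X (f.lTensor (𝒜 1) y) + actA1X k A 𝒜 X (g.lTensor (𝒜 1) y)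
  rw [LinearMap.lTensor_add, LinearMap.add_apply, map_add]

lemma rhoOp_smul (r : ℕ) (c : k) (f : (U k A 𝒜 r ⊗[k] A) →ₗ[k] X) :
    rhoOp k A 𝒜 X r (c • f) = c • rhoOp k A 𝒜 X r f := by
  refine LinearMap.ext fun z => ?_
  let y := TensorProduct.assoc k (𝒜 1) (U k A 𝒜 r) A z
  show actA1X k A 𝒜 X ((c • f).lTensor (𝒜 1) y) = c • actA1X k A 𝒜 X (f.lTensor (𝒜 1) y)
  rw [LinearMap.lTensor_smul, LinearMap.smul_apply, map_smul]

lemma rhoOp_dOp (r : ℕ) (f : (U k A 𝒜 r ⊗[k] A) →ₗ[k] X) :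
    rhoOp k A 𝒜 X (r + 1) (dOp k A 𝒜 X r f) = dOp k A 𝒜 X (r + 1) (rhoOp k A 𝒜 X r f) := by
  refine LinearMap.ext fun z => ?_
  let y := TensorProduct.assoc k (𝒜 1) (U k A 𝒜 (r + 1)) A z
  calc rhoOp k A 𝒜 X (r + 1) (dOp k A 𝒜 X r f) z
      = actA1X k A 𝒜 X ((f ∘ₗ mJoin k A 𝒜 r).lTensor (𝒜 1) y) := rfl
    _ = actA1X k A 𝒜 X (f.lTensor (𝒜 1) (TensorProduct.assoc k (𝒜 1) (U k A 𝒜 r) A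
          ((TensorProduct.assoc k (𝒜 1) (U k A 𝒜 r) A).symm
            ((mJoin k A 𝒜 r).lTensor (𝒜 1) y)))) := by
      rw [LinearEquiv.apply_symm_apply, LinearMap.lTensor_comp_apply]
    _ = dOp k A 𝒜 X (r + 1) (rhoOp k A 𝒜 X r f) z := rfl

lemma parOp_succ_parOp (r : ℕ) (f : (U k A 𝒜 r ⊗[k] A) →ₗ[k] X) :
    parOp k A 𝒜 X (r + 1) (parOp k A 𝒜 X r f) =
      dOp k A 𝒜 X (r + 1) (dOp k A 𝒜 X r f) - rhoOp k A 𝒜 X (r + 1) (rhoOp k A 𝒜 X r f) := by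
  have hsq : (-1 : k) ^ r * (-1) ^ r = 1 := by rw [← mul_pow, neg_one_mul, neg_neg, one_pow]
  simp only [parOp, dOp_add, dOp_smul, rhoOp_add, rhoOp_smul, rhoOp_dOp, smul_add, smul_smul,
    pow_succ, mul_neg_one, neg_mul, hsq, neg_smul, one_smul]
  abel

lemma rhoOp_rhoOp_assoc_tmul (r : ℕ) (f : (U k A 𝒜 r ⊗[k] A) →ₗ[k] X)
    (s : 𝒜 1 ⊗[k] 𝒜 1) (t : U k A 𝒜 r) (a : A) :
    rhoOp k A 𝒜 X (r + 1) (rhoOp k A 𝒜 X r f)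
      (TensorProduct.assoc k (𝒜 1) (𝒜 1) (U k A 𝒜 r) (s ⊗ₜ t) ⊗ₜ a) =
      LinearMap.mul' k A (TensorProduct.map (𝒜 1).subtype (𝒜 1).subtype s) • f (t ⊗ₜ a) := by
  let L : 𝒜 1 ⊗[k] 𝒜 1 →ₗ[k] X := rhoOp k A 𝒜 X (r + 1) (rhoOp k A 𝒜 X r f) ∘ₗ
    (TensorProduct.mk k (U k A 𝒜 (r + 2)) A).flip a ∘ₗ
      (TensorProduct.assoc k (𝒜 1) (𝒜 1) (U k A 𝒜 r)).toLinearMap ∘ₗ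
        (TensorProduct.mk k (𝒜 1 ⊗[k] 𝒜 1) (U k A 𝒜 r)).flip t
  let R : 𝒜 1 ⊗[k] 𝒜 1 →ₗ[k] X := (actAX k A X).flip (f (t ⊗ₜ a)) ∘ₗ
    LinearMap.mul' k A ∘ₗ TensorProduct.map (𝒜 1).subtype (𝒜 1).subtype
  have hLR : L = R := TensorProduct.ext' fun x y =>
    show (x : A) • (y : A) • f (t ⊗ₜ a) = ((x : A) * y) • f (t ⊗ₜ a) from (mul_smul ..).symm
  exact LinearMap.congr_fun hLR s

lemma rhoOp_rhoOp_tmul_eq_zero (r : ℕ) (f : (U k A 𝒜 r ⊗[k] A) →ₗ[k] X) {u : U k A 𝒜 (r + 2)}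
    (hu : u ∈ Submodule.map (TensorProduct.assoc k (𝒜 1) (𝒜 1) (U k A 𝒜 r)).toLinearMap
      (Submodule.map₂ (TensorProduct.mk k (𝒜 1 ⊗[k] 𝒜 1) (U k A 𝒜 r)) (S2 k A 𝒜) ⊤))
    (a : A) : rhoOp k A 𝒜 X (r + 1) (rhoOp k A 𝒜 X r f) (u ⊗ₜ a) = 0 := by
  obtain ⟨w, hw, rfl⟩ := hu
  refine (Submodule.map₂_le.mpr ?_ : _ ≤ LinearMap.ker
    (rhoOp k A 𝒜 X (r + 1) (rhoOp k A 𝒜 X r f) ∘ₗ (TensorProduct.mk k _ A).flip a ∘ₗ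
      (TensorProduct.assoc k (𝒜 1) (𝒜 1) (U k A 𝒜 r)).toLinearMap)) hw
  intro s hs t _
  have hs : LinearMap.mul' k A (TensorProduct.map (𝒜 1).subtype (𝒜 1).subtype s) = 0 := hs
  show rhoOp k A 𝒜 X (r + 1) (rhoOp k A 𝒜 X r f)
    (TensorProduct.assoc k (𝒜 1) (𝒜 1) (U k A 𝒜 r) (s ⊗ₜ t) ⊗ₜ a) = 0
  rw [rhoOp_rhoOp_assoc_tmul, hs, zero_smul]

end

theorem I_complex_differential_general
    (k A : Type u) [Field k] [Ring A] [Algebra k A] (𝒜 : ℕ → Submodule k A)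
    (X : Type u) [AddCommGroup X] [Module k X] [Module A X] [IsScalarTower k A X]
    (K : ∀ r : ℕ, Submodule k (U k A 𝒜 r))
    (hK2 : ∀ r : ℕ,
      K (r + 2) ≤
        Submodule.map (TensorProduct.assoc k ↥(𝒜 1) ↥(𝒜 1) (U k A 𝒜 r)).toLinearMap
          (Submodule.map₂ (TensorProduct.mk k (↥(𝒜 1) ⊗[k] ↥(𝒜 1)) (U k A 𝒜 r))
            (S2 k A 𝒜) ⊤))
    (hKlast : ∀ r : ℕ, K (r + 2) ≤ lastJ k A 𝒜 r) :
    -- `ρ ∘ ρ = 0` on the Koszul part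
    (∀ (r : ℕ) (f : (U k A 𝒜 r ⊗[k] A) →ₗ[k] X),
      ∀ z ∈ KAU k A 𝒜 K (r + 2),
        rhoOp k A 𝒜 X (r + 1) (rhoOp k A 𝒜 X r f) z = 0) ∧
    -- `ρ ∘ d = d ∘ ρ`
    (∀ (r : ℕ) (f : (U k A 𝒜 r ⊗[k] A) →ₗ[k] X),
      rhoOp k A 𝒜 X (r + 1) (dOp k A 𝒜 X r f) =
        dOp k A 𝒜 X (r + 1) (rhoOp k A 𝒜 X r f)) ∧
    -- consequently `∂ ∘ ∂ = 0` on the Koszul part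
    (∀ (r : ℕ) (f : (U k A 𝒜 r ⊗[k] A) →ₗ[k] X),
      ∀ z ∈ KAU k A 𝒜 K (r + 2),
        parOp k A 𝒜 X (r + 1) (parOp k A 𝒜 X r f) z = 0) := by
  have hρρ : ∀ (r : ℕ) (f : (U k A 𝒜 r ⊗[k] A) →ₗ[k] X), ∀ z ∈ KAU k A 𝒜 K (r + 2),
      rhoOp k A 𝒜 X (r + 1) (rhoOp k A 𝒜 X r f) z = 0 := fun r f _ hz =>
    map_eq_zero_of_mem_KAU (fun _ hu a => rhoOp_rhoOp_tmul_eq_zero r f (hK2 r hu) a) hz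
  have hdd : ∀ (r : ℕ) (f : (U k A 𝒜 r ⊗[k] A) →ₗ[k] X), ∀ z ∈ KAU k A 𝒜 K (r + 2),
      dOp k A 𝒜 X (r + 1) (dOp k A 𝒜 X r f) z = 0 := fun r f _ hz =>
    map_eq_zero_of_mem_KAU (fun _ hu a => dOp_dOp_tmul_eq_zero r f (hKlast r hu) a) hz
  refine ⟨hρρ, rhoOp_dOp, fun r f z hz => ?_⟩
  rw [parOp_succ_parOp, LinearMap.sub_apply, hdd r f z hz, hρρ r f z hz, sub_zero]

/-- Let `A` be a graded algebra (grading `𝒜`, `A₁ = 𝒜 1`),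
`𝖷` a (graded) left `A`-module, `K r` the Koszul subspaces of `T^r(A₁)` (given
together with the standard inclusions `K_{r+1} ⊆ A₁ ⊗ K_r`,
`K_{r+2} ⊆ ker(m|_{A₁⊗A₁}) ⊗ T^r` and `K_{r+2} ⊆ T^r ⊗ ker(m|_{A₁⊗A₁})`).
For `f ∈ 𝖨^r(𝖷) = Hom((K_A)_r ⊗ A, 𝖷)` put `d_r f = f ∘ (id^{⊗r} ⊗ m_{A₁,A})` and
`ρ_r f = λ_𝖷 ∘ (id_{A₁} ⊗ f)`.  Then `ρ_{r+1} ∘ ρ_r = 0` and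
`ρ_{r+1} ∘ d_r = d_{r+1} ∘ ρ_r`; consequently `∂_r = d_r + (-1)^r ρ_r` satisfies
`∂_{r+1} ∘ ∂_r = 0` (on the Koszul part), so `(𝖨^•(𝖷), ∂)` is a complex. -/
theorem I_complex_differential
    (k A : Type u) [Field k] [Ring A] [Algebra k A] (𝒜 : ℕ → Submodule k A)
    (X : Type u) [AddCommGroup X] [Module k X] [Module A X] [IsScalarTower k A X]
    (K : ∀ r : ℕ, Submodule k (U k A 𝒜 r))
    (hK1 : ∀ r : ℕ,
      K (r + 1) ≤ Submodule.map₂ (TensorProduct.mk k ↥(𝒜 1) (U k A 𝒜 r)) ⊤ (K r))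
    (hK2 : ∀ r : ℕ,
      K (r + 2) ≤
        Submodule.map (TensorProduct.assoc k ↥(𝒜 1) ↥(𝒜 1) (U k A 𝒜 r)).toLinearMap
          (Submodule.map₂ (TensorProduct.mk k (↥(𝒜 1) ⊗[k] ↥(𝒜 1)) (U k A 𝒜 r))
            (S2 k A 𝒜) ⊤))
    (hKlast : ∀ r : ℕ, K (r + 2) ≤ lastJ k A 𝒜 r) :
    -- `ρ ∘ ρ = 0` on the Koszul part
    (∀ (r : ℕ) (f : (U k A 𝒜 r ⊗[k] A) →ₗ[k] X),
      ∀ z ∈ KAU k A 𝒜 K (r + 2),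
        rhoOp k A 𝒜 X (r + 1) (rhoOp k A 𝒜 X r f) z = 0) ∧
    -- `ρ ∘ d = d ∘ ρ`
    (∀ (r : ℕ) (f : (U k A 𝒜 r ⊗[k] A) →ₗ[k] X),
      rhoOp k A 𝒜 X (r + 1) (dOp k A 𝒜 X r f) =
        dOp k A 𝒜 X (r + 1) (rhoOp k A 𝒜 X r f)) ∧
    -- consequently `∂ ∘ ∂ = 0` on the Koszul part
    (∀ (r : ℕ) (f : (U k A 𝒜 r ⊗[k] A) →ₗ[k] X),
      ∀ z ∈ KAU k A 𝒜 K (r + 2),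
        parOp k A 𝒜 X (r + 1) (parOp k A 𝒜 X r f) z = 0) :=
  I_complex_differential_general k A 𝒜 X K hK2 hKlast
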